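/- For all integers k ≥ 1 and p ≥ k, the sum Σ_{i=k}^{2p-k} (-1)^i C(2p,i) C(-2p, 2p-k-i) C(-2p, i-k) equals 2(-1)^p (3p-1-k)! / ((2p-k) * ((p-1)!)^2 * (p-k)!). -/

import Mathlib

/-- Generalized binomial coefficient `C(t,k) = t(t-1)⋯(t-k+1)/k!`. -/
def gchoose (t : ℚ) (k : ℕ) : ℚ := (∏ j ∈ Finset.range k, (t - j)) / (Nat.factorial k)

/-!
Both sides satisfy the first-order recurrence
`(3p-k-1)(2p-k-1) X(k+1) = (2p-k)(p-k) X(k)` for `k < p`, and they agree at `k = p`, where the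
sum has the single term `(-1)^p C(2p,p)`. For the sum the recurrence comes from creative
telescoping (Zeilberger): with `F(k,i)` the summand and the certificate
`R(i) = (4p-2k-1) i (i-k) / (2(2p+i-k-1))`, the combination
`(3p-k-1)(2p-k-1) F(k+1,i) - (2p-k)(p-k) F(k,i)` equals `G(i+1) - G(i)`, `G = R F(k,·)`, for
`k < i < 2p-k`. Summing over these `i`, the telescoped ends `G(2p-k)` and `G(k+1)` are exactly
the two boundary terms `(2p-k)(p-k) F(k,2p-k)` and `-(2p-k)(p-k) F(k,k)`.
-/

open Finset

theorem gchoose_zero (t : ℚ) : gchoose t 0 = 1 := by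
  simp [gchoose]

theorem gchoose_succ (t : ℚ) (m : ℕ) :
    gchoose t (m + 1) = gchoose t m * ((t - m) / (m + 1)) := by
  simp only [gchoose, prod_range_succ, Nat.factorial_succ]
  push_cast
  field_simp

theorem gchoose_natCast (n k : ℕ) : gchoose n k = n.choose k := by
  have h := descPochhammer_eval_eq_descFactorial ℚ n k
  rw [descPochhammer_eval_eq_prod_range, Nat.descFactorial_eq_factorial_mul_choose] at h
  rw [gchoose, h]
  push_cast
  field_simp

namespace TripleBinomialSum

def term (p i m n : ℕ) : ℚ :=
  (-1 : ℚ) ^ i * gchoose (2 * p) i * gchoose (-2 * p) m * gchoose (-2 * p) n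

def summand (p k i : ℕ) : ℚ := term p i (2 * p - k - i) (i - k)

def tripleSum (p k : ℕ) : ℚ := ∑ i ∈ Icc k (2 * p - k), summand p k i

def closedForm (p k : ℕ) : ℚ :=
  2 * (-1 : ℚ) ^ p * (Nat.factorial (3 * p - 1 - k)) /
    ((2 * (p : ℚ) - k) * (Nat.factorial (p - 1) : ℚ) ^ 2 * (Nat.factorial (p - k)))

def certificate (p k i : ℕ) : ℚ :=
  (4 * p - 2 * k - 1) * i * (i - k) / (2 * (2 * p + i - k - 1))

def antidifference (p k i : ℕ) : ℚ := certificate p k i * summand p k i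

theorem term_succ_fst (p i m n : ℕ) :
    term p (i + 1) m n = term p i m n * (-((2 * p - i) / (i + 1))) := by
  simp only [term, gchoose_succ, pow_succ]
  ring

theorem term_succ_snd (p i m n : ℕ) :
    term p i (m + 1) n = term p i m n * ((-2 * p - m) / (m + 1)) := by
  simp only [term, gchoose_succ]
  ring

theorem term_succ_thd (p i m n : ℕ) :
    term p i m (n + 1) = term p i m n * ((-2 * p - n) / (n + 1)) := by
  simp only [term, gchoose_succ]
  ring

variable {p k i : ℕ}

theorem summand_eq_mul_of_lt (hki : k < i) (hik : i + k < 2 * p) :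
    summand p k i = summand p (k + 1) i *
      ((4 * p - k - i - 1) / (2 * p - k - i) * ((2 * p + i - k - 1) / (i - k))) := by
  obtain ⟨m, hm⟩ : ∃ m, 2 * p - k - i = m + 1 := ⟨2 * p - k - i - 1, by omega⟩
  obtain ⟨n, hn⟩ : ∃ n, i - k = n + 1 := ⟨i - k - 1, by omega⟩
  have hmQ : (m : ℚ) + 1 = 2 * p - k - i := by
    have h : (m : ℚ) + 1 + k + i = 2 * p := by exact_mod_cast (by omega : m + 1 + k + i = 2 * p)
    linarith
  have hnQ : (n : ℚ) + 1 = i - k := by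
    have h : (n : ℚ) + 1 + k = i := by exact_mod_cast (by omega : n + 1 + k = i)
    linarith
  rw [summand, summand, hm, hn, show 2 * p - (k + 1) - i = m by omega,
    show i - (k + 1) = n by omega, term_succ_snd, term_succ_thd, mul_assoc]
  congr 1
  rw [hmQ, hnQ, show (-2 * p - m : ℚ) = -(4 * p - k - i - 1) by linarith,
    show (-2 * p - n : ℚ) = -(2 * p + i - k - 1) by linarith]
  ring

theorem summand_succ_eq_mul_of_lt (hki : k < i) (hik : i + k < 2 * p) :
    summand p k (i + 1) = summand p (k + 1) i *
      (-((2 * p - i) / (i + 1)) * ((2 * p + i - k - 1) / (i - k)) *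
        ((2 * p + i - k) / (i - k + 1))) := by
  obtain ⟨n, hn⟩ : ∃ n, i - (k + 1) = n := ⟨_, rfl⟩
  have hnQ : (n : ℚ) + 1 = i - k := by
    have h : (n : ℚ) + 1 + k = i := by exact_mod_cast (by omega : n + 1 + k = i)
    linarith
  rw [summand, summand, show 2 * p - k - (i + 1) = 2 * p - (k + 1) - i by omega,
    show i + 1 - k = n + 1 + 1 by omega, hn, term_succ_fst, term_succ_thd, term_succ_thd]
  simp only [mul_assoc]
  congr 1
  push_cast
  rw [hnQ, show (-2 * p - n : ℚ) = -(2 * p + i - k - 1) by linarith,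
    show (-2 * p - (i - k) : ℚ) = -(2 * p + i - k) by ring]
  ring

theorem antidifference_succ_self (hkp : k < p) :
    antidifference p k (k + 1) = -((2 * p - k) * (p - k)) * summand p k k := by
  obtain ⟨m, hm⟩ : ∃ m, 2 * p - k - (k + 1) = m := ⟨_, rfl⟩
  have hmQ : (m : ℚ) + 1 = 2 * (p - k) := by
    have h : (m : ℚ) + 1 + 2 * k = 2 * p := by exact_mod_cast (by omega : m + 1 + 2 * k = 2 * p)
    linarith
  have hp : (p : ℚ) ≠ 0 := Nat.cast_ne_zero.2 (by omega)
  have hpk : (p : ℚ) - k ≠ 0 := sub_ne_zero.2 (by exact_mod_cast hkp.ne')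
  rw [antidifference, summand, summand, hm, show 2 * p - k - k = m + 1 by omega,
    show k + 1 - k = 0 + 1 by omega, Nat.sub_self, term_succ_fst, term_succ_thd, term_succ_snd,
    certificate]
  push_cast
  rw [show (-2 * p - m : ℚ) = -(4 * p - 2 * k - 1) by linarith, hmQ,
    show (2 * p + (k + 1) - k - 1 : ℚ) = 2 * p by ring]
  field_simp
  ring

theorem antidifference_two_mul_sub (hkp : k < p) :
    antidifference p k (2 * p - k) = (2 * p - k) * (p - k) * summand p k (2 * p - k) := by
  have h : (4 * p - 2 * k - 1 : ℚ) ≠ 0 := by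
    have : (k : ℚ) + 1 ≤ p := by exact_mod_cast hkp
    linarith
  rw [antidifference, certificate, Nat.cast_sub (by omega)]
  push_cast
  rw [show (2 * p + (2 * p - k) - k - 1 : ℚ) = 4 * p - 2 * k - 1 by ring]
  field_simp
  ring

theorem summand_recurrence_of_lt (hki : k < i) (hik : i + k < 2 * p) :
    (3 * p - k - 1) * (2 * p - k - 1) * summand p (k + 1) i =
      (2 * p - k) * (p - k) * summand p k i +
        (antidifference p k (i + 1) - antidifference p k i) := by
  have hki' : (k : ℚ) + 1 ≤ i := by exact_mod_cast hki
  have hik' : (i : ℚ) + k + 1 ≤ 2 * p := by exact_mod_cast hik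
  have h₁ : (2 * p - k - i : ℚ) ≠ 0 := by linarith
  have h₂ : (i - k : ℚ) ≠ 0 := by linarith
  have h₃ : (i - k + 1 : ℚ) ≠ 0 := by linarith
  have h₄ : (2 * p + i - k - 1 : ℚ) ≠ 0 := by linarith
  have h₅ : (2 * p + i - k : ℚ) ≠ 0 := by linarith
  rw [antidifference, antidifference, summand_succ_eq_mul_of_lt hki hik,
    summand_eq_mul_of_lt hki hik, certificate, certificate]
  push_cast
  rw [show (2 * p + (i + 1) - k - 1 : ℚ) = 2 * p + i - k by ring]
  -- `field_simp` recognises these denominators as nonzero only once they are atoms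
  generalize hx : (2 * p - k - i : ℚ) = x at h₁ ⊢
  generalize hz : (2 * p + i - k - 1 : ℚ) = z at h₄ ⊢
  generalize hy : (2 * p + i - k : ℚ) = y at h₅ ⊢
  field_simp
  subst hx hy hz
  ring

theorem tripleSum_succ (hkp : k < p) :
    (3 * p - k - 1) * (2 * p - k - 1) * tripleSum p (k + 1) =
      (2 * p - k) * (p - k) * tripleSum p k := by
  have hsplit : tripleSum p k = summand p k k + ∑ i ∈ Ico (k + 1) (2 * p - k), summand p k i +
      summand p k (2 * p - k) := by
    rw [tripleSum, ← sum_Ico_add_eq_sum_Icc (by omega), sum_eq_sum_Ico_succ_bot (by omega)]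
  rw [tripleSum, ← Ico_add_one_right_eq_Icc, show 2 * p - (k + 1) + 1 = 2 * p - k by omega,
    mul_sum, sum_congr rfl fun i hi => summand_recurrence_of_lt (mem_Ico.1 hi).1
      (by have := (mem_Ico.1 hi).2; omega),
    sum_add_distrib, ← mul_sum, sum_Ico_sub (antidifference p k) (by omega), hsplit,
    antidifference_two_mul_sub hkp, antidifference_succ_self hkp]
  ring

theorem closedForm_succ (hkp : k < p) :
    (3 * p - k - 1) * (2 * p - k - 1) * closedForm p (k + 1) =
      (2 * p - k) * (p - k) * closedForm p k := by
  obtain ⟨a, ha⟩ : ∃ a, 3 * p - 1 - (k + 1) = a := ⟨_, rfl⟩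
  obtain ⟨b, hb⟩ : ∃ b, p - (k + 1) = b := ⟨_, rfl⟩
  have haQ : (a : ℚ) + 1 = 3 * p - k - 1 := by
    have h : (a : ℚ) + 1 + k + 1 = 3 * p := by exact_mod_cast (by omega : a + 1 + k + 1 = 3 * p)
    linarith
  have hbQ : (b : ℚ) + 1 = p - k := by
    have h : (b : ℚ) + 1 + k = p := by exact_mod_cast (by omega : b + 1 + k = p)
    linarith
  have hkp' : (k : ℚ) + 1 ≤ p := by exact_mod_cast hkp
  have h₁ : (2 * p - k : ℚ) ≠ 0 := by linarith
  have h₂ : (2 * p - k - 1 : ℚ) ≠ 0 := by linarith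
  rw [closedForm, closedForm, ha, hb, show 3 * p - 1 - k = a + 1 by omega,
    show p - k = b + 1 by omega, Nat.factorial_succ, Nat.factorial_succ]
  push_cast
  rw [← haQ, ← hbQ, show (2 * p - (k + 1) : ℚ) = 2 * p - k - 1 by ring]
  field_simp

theorem tripleSum_self (hp : 0 < p) : tripleSum p p = closedForm p p := by
  have hsum : tripleSum p p = (-1) ^ p * (2 * p).choose p := by
    rw [tripleSum, show 2 * p - p = p by omega, Icc_self, sum_singleton, summand, term,
      show 2 * p - p - p = 0 by omega, Nat.sub_self, gchoose_zero, ← gchoose_natCast]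
    push_cast
    ring
  obtain ⟨q, rfl⟩ : ∃ q, p = q + 1 := ⟨p - 1, by omega⟩
  rw [hsum, closedForm, Nat.cast_choose ℚ (by omega), show 2 * (q + 1) - (q + 1) = q + 1 by omega,
    show 3 * (q + 1) - 1 - (q + 1) = 2 * q + 1 by omega, Nat.add_sub_cancel, Nat.sub_self,
    show 2 * (q + 1) = 2 * q + 1 + 1 by ring, Nat.factorial_succ (2 * q + 1), Nat.factorial_succ q,
    Nat.factorial_zero]
  push_cast
  rw [show (2 * (q + 1) - (q + 1) : ℚ) = q + 1 by ring]
  field_simp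
  ring

theorem tripleSum_eq_closedForm (hp : 0 < p) (hkp : k ≤ p) : tripleSum p k = closedForm p k := by
  induction hkp using Nat.decreasingInduction with
  | self => exact tripleSum_self hp
  | of_succ k hk ih =>
    have hk' : (k : ℚ) + 1 ≤ p := by exact_mod_cast hk
    have hb : (2 * p - k : ℚ) * (p - k) ≠ 0 := mul_ne_zero (by linarith) (by linarith)
    apply mul_left_cancel₀ hb
    rw [← tripleSum_succ hk, ← closedForm_succ hk, ih]

end TripleBinomialSum

/-- For all integers `k ≥ 1` and `p ≥ k`,
`∑_{i=k}^{2p-k} (-1)^i C(2p,i) C(-2p,2p-k-i) C(-2p,i-k)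
  = 2 (-1)^p (3p-1-k)! / ((2p-k) ((p-1)!)^2 (p-k)!)`. -/
theorem stmt4 (k p : ℕ) (hk : 1 ≤ k) (hp : k ≤ p) :
    ∑ i ∈ Finset.Icc k (2 * p - k),
      (-1 : ℚ) ^ i * gchoose (2 * p) i * gchoose (-2 * p) (2 * p - k - i) *
        gchoose (-2 * p) (i - k)
    = 2 * (-1 : ℚ) ^ p * (Nat.factorial (3 * p - 1 - k)) /
        ((2 * (p : ℚ) - k) * (Nat.factorial (p - 1) : ℚ) ^ 2 * (Nat.factorial (p - k))) :=
  TripleBinomialSum.tripleSum_eq_closedForm (by omega) hp
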